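/- arXiv:1403.8076 — 2 statements merged into one kernel-verified Lean document; each statement's English description precedes it below -/
import Mathlib

section
/- Let n ≥ 1, let k be a field, and let k⟨X⟩ be the free associative algebra over k on generators x_1,…,x_n. Let S = { x_{σ(1)}x_{σ(2)}⋯x_{σ(n)} − x_1x_2⋯x_n : σ ∈ Sym_n, σ ≠ id } and let S̃ be the union of S with the following sets of polynomials (where x_ε denotes x_1x_2⋯x_n): (2) x_i·x_ε − x_ε·x_i for 2 ≤ i ≤ n; (3) x_i·x_1^m·x_ε − x_1^m·x_ε·x_i for m ≥ 1 and 2 ≤ i ≤ n; (4) x_ε·x_{i_1}⋯x_{i_{m+1}} − x_ε·x_{j_1}⋯x_{j_{m+1}} for m ≥ 1 and 2 ≤ i_1,…,i_{m+1} ≤ n, where (j_1,…,j_{m+1}) is the nondecreasing rearrangement of (i_1,…,i_{m+1}) and is distinct from (i_1,…,i_{m+1}); (5) x_ε·x_{i_1}⋯x_{i_m}·x_1 − x_1·x_ε·x_{i_1}⋯x_{i_m} for m ≥ 1 and 2 ≤ i_1,…,i_m ≤ n. Then the two-sided ideal of k⟨X⟩ generated by S equals the two-sided ideal generated by S̃.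 -/
/-- The monomial of `k⟨X⟩` corresponding to a word `w` in the generators. -/
noncomputable def wordElem (k : Type) [Field k] {n : ℕ} (w : List (Fin n)) :
    FreeAlgebra k (Fin n) :=
  (w.map (FreeAlgebra.ι k)).prod

/-- The monomial `x_ε = x_1 x_2 ⋯ x_n` of `k⟨X⟩`. -/
noncomputable def epsElem (k : Type) [Field k] (n : ℕ) : FreeAlgebra k (Fin n) :=
  wordElem k (List.ofFn fun i : Fin n => i)

/-- The set `{ x_{σ(1)} ⋯ x_{σ(n)} − x_1 ⋯ x_n : σ ∈ Sym_n }`. -/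
noncomputable def relSet (k : Type) [Field k] (n : ℕ) : Set (FreeAlgebra k (Fin n)) :=
  { p | ∃ σ : Equiv.Perm (Fin n),
      p = wordElem k (List.ofFn fun i => σ i) - epsElem k n }

/-!
Modulo the ideal generated by `S`, every word that uses each letter exactly once equals `x_ε`.
Writing `x_ε` once as `r x_i` and once as `x_i r` for a suitable word `r` gives
`x_i x_ε ≡ (x_i r) x_i ≡ x_ε x_i`, so `x_ε` is central modulo `S`; the same trick with two letters
gives `x_b x_c x_ε ≡ x_ε x_c x_b`. Hence products containing the factor `x_ε` may be
rearranged freely modulo `S`, and every polynomial of types (2)–(5) is the difference of two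
such rearrangements.
-/

open List

theorem List.exists_ofFn_eq_of_perm_finRange {n : ℕ} {w : List (Fin n)} (h : w ~ finRange n) :
    ∃ σ : Equiv.Perm (Fin n), ofFn σ = w := by
  have hlen : w.length = n := by simpa using h.length_eq
  refine ⟨(finCongr hlen.symm).trans ((h.nodup_iff.2 (nodup_finRange n)).getEquivOfForallMemList
    w fun a => h.mem_iff.2 (mem_finRange a)), ?_⟩
  exact List.ext_get (by simpa using hlen.symm) fun i _ _ => by simp

theorem List.Nodup.exists_append_perm_finRange {n : ℕ} {u : List (Fin n)} (hu : u.Nodup) :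
    ∃ r, u ++ r ~ finRange n :=
  ⟨_, subperm_append_diff_self_of_count_le fun a _ =>
    (hu.subperm fun b _ => mem_finRange b).count_le a⟩

theorem Commute.mul_swap_of_commute {M : Type*} [Semigroup M] {e a b : M}
    (h : Commute (e * a) b) (hea : Commute e a) (heb : Commute e b) : Commute (e * b) a :=
  calc e * b * a = b * (e * a) := by rw [heb.eq, mul_assoc]
    _ = e * a * b := h.eq.symm
    _ = a * (e * b) := by rw [hea.eq, mul_assoc]

theorem FreeAlgebra.commute_map_of_forall_commute_ι {R X A : Type*} [CommSemiring R] [Semiring A]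
    [Algebra R A] (f : FreeAlgebra R X →ₐ[R] A) {a : A} (h : ∀ i, Commute a (f (ι R i)))
    (x : FreeAlgebra R X) : Commute a (f x) := by
  induction x using FreeAlgebra.induction with
  | grade0 r => rw [AlgHom.commutes]; exact Algebra.commute_algebraMap_right r a
  | grade1 i => exact h i
  | mul x y hx hy => rw [map_mul]; exact hx.mul_right hy
  | add x y hx hy => rw [map_add]; exact hx.add_right hy

theorem TwoSidedIdeal.ringCon_mkₐ_eq_iff (R : Type*) {A : Type*} [CommRing R] [Ring A]
    [Algebra R A] (I : TwoSidedIdeal A) {a b : A} :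
    I.ringCon.mkₐ R a = I.ringCon.mkₐ R b ↔ a - b ∈ I :=
  (RingCon.eq _).trans (I.rel_iff a b)

section WordElem

variable {k : Type} [Field k] {n : ℕ}

theorem wordElem_cons (a : Fin n) (l : List (Fin n)) :
    wordElem k (a :: l) = FreeAlgebra.ι k a * wordElem k l := by
  simp [wordElem]

theorem wordElem_append (u v : List (Fin n)) :
    wordElem k (u ++ v) = wordElem k u * wordElem k v := by
  simp [wordElem]

-- `f` plays the role of the quotient map by the ideal generated by `S`.
variable {A : Type*} [Ring A] [Algebra k A] {f : FreeAlgebra k (Fin n) →ₐ[k] A}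
  (hf : ∀ σ : Equiv.Perm (Fin n), f (wordElem k (ofFn σ)) = f (epsElem k n))
include hf

theorem map_wordElem_of_perm_finRange {w : List (Fin n)} (hw : w ~ finRange n) :
    f (wordElem k w) = f (epsElem k n) := by
  obtain ⟨σ, rfl⟩ := exists_ofFn_eq_of_perm_finRange hw
  exact hf σ

theorem map_wordElem_mul_epsElem_of_nodup {u : List (Fin n)} (hu : u.Nodup) :
    f (wordElem k u) * f (epsElem k n) = f (epsElem k n) * f (wordElem k u.reverse) := by
  obtain ⟨r, hr⟩ := hu.exists_append_perm_finRange
  have hr' : r ++ u.reverse ~ finRange n :=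
    ((reverse_perm u).append_left r).trans (perm_append_comm.trans hr)
  calc f (wordElem k u) * f (epsElem k n)
      = f (wordElem k u) * f (wordElem k (r ++ u.reverse)) := by
        rw [map_wordElem_of_perm_finRange hf hr']
    _ = f (wordElem k (u ++ r)) * f (wordElem k u.reverse) := by
        simp only [wordElem_append, map_mul, mul_assoc]
    _ = f (epsElem k n) * f (wordElem k u.reverse) := by
        rw [map_wordElem_of_perm_finRange hf hr]

theorem commute_map_epsElem (x : FreeAlgebra k (Fin n)) : Commute (f (epsElem k n)) (f x) :=
  FreeAlgebra.commute_map_of_forall_commute_ι f (fun i => by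
    rw [Commute, SemiconjBy]
    simpa [wordElem] using (map_wordElem_mul_epsElem_of_nodup hf (nodup_singleton i)).symm) x

theorem commute_map_epsElem_mul_ι (b c : Fin n) :
    Commute (f (epsElem k n) * f (FreeAlgebra.ι k b)) (f (FreeAlgebra.ι k c)) := by
  by_cases hbc : b = c
  · exact hbc ▸ (commute_map_epsElem hf _).mul_left (Commute.refl _)
  have key := map_wordElem_mul_epsElem_of_nodup hf (u := [b, c]) (by simp [hbc])
  simp only [wordElem, map_cons, map_nil, prod_cons, prod_nil, mul_one, reverse_cons,
    reverse_nil, nil_append, cons_append, map_mul] at key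
  calc f (epsElem k n) * f (FreeAlgebra.ι k b) * f (FreeAlgebra.ι k c)
      = f (FreeAlgebra.ι k b) * f (FreeAlgebra.ι k c) * f (epsElem k n) := by
        rw [mul_assoc, ← map_mul, (commute_map_epsElem hf _).eq, map_mul]
    _ = f (epsElem k n) * (f (FreeAlgebra.ι k c) * f (FreeAlgebra.ι k b)) := key
    _ = f (FreeAlgebra.ι k c) * (f (epsElem k n) * f (FreeAlgebra.ι k b)) := by
        rw [← mul_assoc, (commute_map_epsElem hf _).eq, mul_assoc]

theorem commute_map_epsElem_mul (x y : FreeAlgebra k (Fin n)) :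
    Commute (f (epsElem k n) * f x) (f y) := by
  have hι : ∀ b, Commute (f (epsElem k n) * f (FreeAlgebra.ι k b)) (f x) :=
    fun b => FreeAlgebra.commute_map_of_forall_commute_ι f (commute_map_epsElem_mul_ι hf b) x
  exact FreeAlgebra.commute_map_of_forall_commute_ι f
    (fun b => (hι b).mul_swap_of_commute (commute_map_epsElem hf _) (commute_map_epsElem hf _)) y

theorem map_mul_epsElem (x : FreeAlgebra k (Fin n)) :
    f (x * epsElem k n) = f (epsElem k n * x) := by
  simp only [map_mul]
  exact (commute_map_epsElem hf x).eq.symm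

theorem map_mul_epsElem_mul (x y : FreeAlgebra k (Fin n)) :
    f (x * epsElem k n * y) = f (epsElem k n * x * y) := by
  rw [map_mul, map_mul_epsElem hf, ← map_mul]

theorem map_epsElem_mul_mul_comm (x y : FreeAlgebra k (Fin n)) :
    f (epsElem k n * x * y) = f (epsElem k n * y * x) := by
  simp only [map_mul]
  rw [(commute_map_epsElem_mul hf x y).eq, ← mul_assoc, ← (commute_map_epsElem hf y).eq]

theorem map_epsElem_mul_wordElem_cons (a : Fin n) (l : List (Fin n)) :
    f (epsElem k n * wordElem k (a :: l)) =
      f (FreeAlgebra.ι k a) * f (epsElem k n * wordElem k l) := by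
  rw [wordElem_cons, ← mul_assoc, ← map_mul_epsElem_mul hf, mul_assoc, map_mul]

theorem map_epsElem_mul_wordElem_of_perm {u v : List (Fin n)} (h : u ~ v) :
    f (epsElem k n * wordElem k u) = f (epsElem k n * wordElem k v) := by
  induction h with
  | nil => rfl
  | cons a _ ih => rw [map_epsElem_mul_wordElem_cons hf, map_epsElem_mul_wordElem_cons hf, ih]
  | swap a b l =>
    simp only [wordElem_cons, ← mul_assoc]
    rw [map_mul, map_epsElem_mul_mul_comm hf, ← map_mul]
  | trans _ _ ih₁ ih₂ => exact ih₁.trans ih₂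

end WordElem

/-- The ideal generated by the permutation relations of symmetric type equals the ideal
generated by the enlarged set `S̃` consisting of the five types of polynomials. -/
theorem span_S_eq_span_Stilde (n : ℕ) (hn : 1 ≤ n) (k : Type) [Field k] :
    TwoSidedIdeal.span
      {p : FreeAlgebra k (Fin n) | ∃ σ : Equiv.Perm (Fin n), σ ≠ 1 ∧
          p = wordElem k (List.ofFn fun i => σ i) - epsElem k n} =
    TwoSidedIdeal.span
      ({p : FreeAlgebra k (Fin n) | ∃ σ : Equiv.Perm (Fin n), σ ≠ 1 ∧
          p = wordElem k (List.ofFn fun i => σ i) - epsElem k n} ∪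
       {p : FreeAlgebra k (Fin n) | ∃ i : Fin n, i.val ≠ 0 ∧
          p = FreeAlgebra.ι k i * epsElem k n - epsElem k n * FreeAlgebra.ι k i} ∪
       {p : FreeAlgebra k (Fin n) | ∃ (m : ℕ) (i : Fin n), 1 ≤ m ∧ i.val ≠ 0 ∧
          p = FreeAlgebra.ι k i * FreeAlgebra.ι k (⟨0, hn⟩ : Fin n) ^ m * epsElem k n -
            FreeAlgebra.ι k (⟨0, hn⟩ : Fin n) ^ m * epsElem k n * FreeAlgebra.ι k i} ∪
       {p : FreeAlgebra k (Fin n) | ∃ l l' : List (Fin n), 2 ≤ l.length ∧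
          (∀ a ∈ l, a.val ≠ 0) ∧ l.Perm l' ∧ l'.Pairwise (· ≤ ·) ∧ l ≠ l' ∧
          p = epsElem k n * wordElem k l - epsElem k n * wordElem k l'} ∪
       {p : FreeAlgebra k (Fin n) | ∃ l : List (Fin n), 1 ≤ l.length ∧
          (∀ a ∈ l, a.val ≠ 0) ∧
          p = epsElem k n * wordElem k l * FreeAlgebra.ι k (⟨0, hn⟩ : Fin n) -
            FreeAlgebra.ι k (⟨0, hn⟩ : Fin n) * epsElem k n * wordElem k l}) := by
  set S := {p : FreeAlgebra k (Fin n) | ∃ σ : Equiv.Perm (Fin n), σ ≠ 1 ∧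
      p = wordElem k (List.ofFn fun i => σ i) - epsElem k n}
  let f := (TwoSidedIdeal.span S).ringCon.mkₐ k
  have hf : ∀ σ : Equiv.Perm (Fin n), f (wordElem k (ofFn σ)) = f (epsElem k n) := by
    intro σ
    rcases eq_or_ne σ 1 with rfl | hσ
    · rfl
    · exact (TwoSidedIdeal.ringCon_mkₐ_eq_iff k _).2 (TwoSidedIdeal.subset_span ⟨σ, hσ, rfl⟩)
  have hmem {a b} (h : f a = f b) : a - b ∈ TwoSidedIdeal.span S :=
    (TwoSidedIdeal.ringCon_mkₐ_eq_iff k _).1 h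
  refine le_antisymm (TwoSidedIdeal.span_mono fun p hp => Or.inl (Or.inl (Or.inl (Or.inl hp))))
    (TwoSidedIdeal.span_le.2 ?_)
  rintro p ((((hp | ⟨i, -, rfl⟩) | ⟨m, i, -, -, rfl⟩) | ⟨l, l', -, -, hll', -, -, rfl⟩) |
    ⟨l, -, -, rfl⟩)
  · exact TwoSidedIdeal.subset_span hp
  · exact hmem (map_mul_epsElem hf _)
  · refine hmem ?_
    rw [map_mul_epsElem hf, ← mul_assoc, map_epsElem_mul_mul_comm hf, map_mul_epsElem_mul hf]
  · exact hmem (map_epsElem_mul_wordElem_of_perm hf hll')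
  · exact hmem (by rw [map_epsElem_mul_mul_comm hf, map_mul_epsElem_mul hf])
end

section
/- Let n ≥ 1 and let k be a field. Let k⟨X⟩ be the free associative algebra over k on x_1,…,x_n, and let I be the two-sided ideal generated by { x_{σ(1)}⋯x_{σ(n)} − x_1⋯x_n : σ ∈ Sym_n }. Write x_ε = x_1x_2⋯x_n. Then the images in the quotient algebra k⟨X⟩/I of the following set of words form a k-linear basis of k⟨X⟩/I: all words u in x_1,…,x_n that contain no subword of the form x_{σ(1)}x_{σ(2)}⋯x_{σ(n)} for any σ ∈ Sym_n, together with all words of the form x_1^{m_1}·x_ε·x_2^{m_2}⋯x_n^{m_n} with m_1,…,m_n ≥ 0. -/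
/-- The defining relations, as a binary relation on `k⟨X⟩` (`RingQuot` of this relation is
the quotient of `k⟨X⟩` by the two-sided ideal generated by the corresponding differences). -/
def algRel (k : Type) [Field k] (n : ℕ) :
    FreeAlgebra k (Fin n) → FreeAlgebra k (Fin n) → Prop :=
  fun a b => ∃ σ : Equiv.Perm (Fin n),
    a = wordElem k (List.ofFn fun i => σ i) ∧ b = epsElem k n

/-- The word `x_1^{m_1} · x_ε · x_2^{m_2} ⋯ x_n^{m_n}` as a list of generators. -/
def normalList (n : ℕ) (h : 0 < n) (m : Fin n → ℕ) : List (Fin n) :=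
  List.replicate (m ⟨0, h⟩) ⟨0, h⟩ ++ List.ofFn (fun i : Fin n => i) ++
    ((List.finRange n).drop 1).flatMap fun i => List.replicate (m i) i

/-!
The normal form of a word `u` is `u` itself if `u` has no factor `x_σ`, and otherwise
`x_1^{m_1} x_ε x_2^{m_2} ⋯ x_n^{m_n}`, where `m_i + 1` is the number of occurrences of `x_i` in `u`.
Every word equals its normal form in `k⟨X⟩/I`: modulo `I` the word `x_ε` is central and
`x_ε x y ≡ x_ε y x`, so a word containing some `x_σ` only depends on its letter counts.
Conversely, "having the same normal form" is a congruence on the free monoid identifying every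
`x_σ` with `x_ε`, so `k⟨X⟩/I` maps onto the monoid algebra of the quotient monoid, in which
distinct normal forms are distinct basis vectors.
-/

open scoped List

section Words

variable {n : ℕ}

def epsWord (n : ℕ) : List (Fin n) := List.ofFn fun i => i

lemma count_epsWord (i : Fin n) : (epsWord n).count i = 1 :=
  List.count_eq_one_of_mem (List.nodup_ofFn.mpr fun _ _ h => h) (List.mem_ofFn.mpr ⟨i, rfl⟩)

lemma perm_epsWord_iff_count {p : List (Fin n)} : p ~ epsWord n ↔ ∀ i, p.count i = 1 := by
  simp only [List.perm_iff_count, count_epsWord]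

lemma ofFn_perm_epsWord (σ : Equiv.Perm (Fin n)) : List.ofFn σ ~ epsWord n :=
  σ.ofFn_comp_perm id

lemma exists_eq_ofFn_of_perm_epsWord {p : List (Fin n)} (hp : p ~ epsWord n) :
    ∃ σ : Equiv.Perm (Fin n), p = List.ofFn σ := by
  have hl : p.length = n := by simpa [epsWord] using hp.length_eq
  refine ⟨(finCongr hl).symm.trans
    (List.getEquivOfForallCountEqOne p (perm_epsWord_iff_count.mp hp)), ?_⟩
  exact List.ext_get (by simp [hl]) fun _ _ _ => by simp

lemma count_flatMap_finRange_replicate (m : Fin n → ℕ) (i : Fin n) :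
    ((List.finRange n).flatMap fun j => List.replicate (m j) j).count i = m i := by
  rw [List.count_flatMap, ← Fin.sum_univ_def]
  simp [List.count_replicate]

lemma finRange_eq_cons_drop_one (h : 0 < n) :
    List.finRange n = ⟨0, h⟩ :: (List.finRange n).drop 1 := by
  obtain ⟨n, rfl⟩ := Nat.exists_eq_add_of_lt h
  simp [List.finRange_succ]

lemma normalList_perm (h : 0 < n) (m : Fin n → ℕ) :
    normalList n h m ~ epsWord n ++ (List.finRange n).flatMap fun j => List.replicate (m j) j := by
  rw [finRange_eq_cons_drop_one h, List.flatMap_cons, normalList, ← List.append_assoc]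
  exact List.perm_append_comm.append_right _

lemma count_normalList (h : 0 < n) (m : Fin n → ℕ) (i : Fin n) :
    (normalList n h m).count i = m i + 1 := by
  rw [(normalList_perm h m).count_eq, List.count_append, count_epsWord,
    count_flatMap_finRange_replicate, add_comm]

def HasPermInfix (u : List (Fin n)) : Prop :=
  ∃ (σ : Equiv.Perm (Fin n)) (a b : List (Fin n)), u = a ++ List.ofFn σ ++ b

lemma HasPermInfix.of_perm_epsWord {p : List (Fin n)} (hp : p ~ epsWord n) : HasPermInfix p :=
  have ⟨σ, hσ⟩ := exists_eq_ofFn_of_perm_epsWord hp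
  ⟨σ, [], [], by simp [hσ]⟩

lemma HasPermInfix.append_right {u : List (Fin n)} (hu : HasPermInfix u) (w : List (Fin n)) :
    HasPermInfix (u ++ w) := by
  obtain ⟨σ, a, b, rfl⟩ := hu
  exact ⟨σ, a, b ++ w, by simp⟩

lemma HasPermInfix.append_left {u : List (Fin n)} (hu : HasPermInfix u) (w : List (Fin n)) :
    HasPermInfix (w ++ u) := by
  obtain ⟨σ, a, b, rfl⟩ := hu
  exact ⟨σ, w ++ a, b, by simp⟩

lemma HasPermInfix.one_le_count {u : List (Fin n)} (hu : HasPermInfix u) (i : Fin n) :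
    1 ≤ u.count i := by
  obtain ⟨σ, a, b, rfl⟩ := hu
  simp only [List.count_append, (ofFn_perm_epsWord σ).count_eq, count_epsWord]
  omega

lemma hasPermInfix_normalList (h : 0 < n) (m : Fin n → ℕ) : HasPermInfix (normalList n h m) :=
  ⟨Equiv.refl _, _, _, rfl⟩

end Words

section NormalForm

variable {n : ℕ} (h : 0 < n) {u v : List (Fin n)}

open Classical in
noncomputable def normalForm (u : List (Fin n)) : List (Fin n) :=
  if HasPermInfix u then normalList n h (fun i => u.count i - 1) else u

def normalWords : Set (List (Fin n)) :=
  {w | ¬ HasPermInfix w} ∪ {w | ∃ m : Fin n → ℕ, w = normalList n h m}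

lemma normalForm_of_not_hasPermInfix (hu : ¬ HasPermInfix u) : normalForm h u = u :=
  if_neg hu

lemma normalForm_of_hasPermInfix (hu : HasPermInfix u) :
    normalForm h u = normalList n h (fun i => u.count i - 1) :=
  if_pos hu

lemma hasPermInfix_normalForm_iff : HasPermInfix (normalForm h u) ↔ HasPermInfix u := by
  by_cases hu : HasPermInfix u
  · simp only [normalForm_of_hasPermInfix h hu, hasPermInfix_normalList, hu]
  · rw [normalForm_of_not_hasPermInfix h hu]

lemma count_normalForm (i : Fin n) : (normalForm h u).count i = u.count i := by
  by_cases hu : HasPermInfix u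
  · rw [normalForm_of_hasPermInfix h hu, count_normalList]
    have := hu.one_le_count i
    omega
  · rw [normalForm_of_not_hasPermInfix h hu]

lemma normalForm_eq_of_count_eq (hu : HasPermInfix u) (hv : HasPermInfix v)
    (huv : ∀ i, u.count i = v.count i) : normalForm h u = normalForm h v := by
  simp only [normalForm_of_hasPermInfix h hu, normalForm_of_hasPermInfix h hv, huv]

lemma normalForm_normalList (m : Fin n → ℕ) :
    normalForm h (normalList n h m) = normalList n h m := by
  rw [normalForm_of_hasPermInfix h (hasPermInfix_normalList h m)]
  simp only [count_normalList, Nat.add_sub_cancel]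

lemma normalForm_normalForm_append (w : List (Fin n)) :
    normalForm h (normalForm h u ++ w) = normalForm h (u ++ w) := by
  by_cases hu : HasPermInfix u
  · refine normalForm_eq_of_count_eq h (((hasPermInfix_normalForm_iff h).mpr hu).append_right w)
      (hu.append_right w) fun i => ?_
    rw [List.count_append, List.count_append, count_normalForm]
  · rw [normalForm_of_not_hasPermInfix h hu]

lemma normalForm_append_normalForm (w : List (Fin n)) :
    normalForm h (w ++ normalForm h u) = normalForm h (w ++ u) := by
  by_cases hu : HasPermInfix u
  · refine normalForm_eq_of_count_eq h (((hasPermInfix_normalForm_iff h).mpr hu).append_left w)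
      (hu.append_left w) fun i => ?_
    rw [List.count_append, List.count_append, count_normalForm]
  · rw [normalForm_of_not_hasPermInfix h hu]

lemma normalForm_ofFn_perm (σ : Equiv.Perm (Fin n)) :
    normalForm h (List.ofFn σ) = normalForm h (epsWord n) :=
  normalForm_eq_of_count_eq h (.of_perm_epsWord (ofFn_perm_epsWord σ))
    (.of_perm_epsWord (.refl _)) fun i => by rw [(ofFn_perm_epsWord σ).count_eq]

lemma normalForm_mem_normalWords (u : List (Fin n)) : normalForm h u ∈ normalWords h := by
  by_cases hu : HasPermInfix u
  · exact Or.inr ⟨_, normalForm_of_hasPermInfix h hu⟩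
  · rw [normalForm_of_not_hasPermInfix h hu]
    exact Or.inl hu

lemma normalForm_eq_self {w : List (Fin n)} (hw : w ∈ normalWords h) : normalForm h w = w := by
  obtain hw | ⟨m, rfl⟩ := hw
  · exact normalForm_of_not_hasPermInfix h hw
  · exact normalForm_normalList h m

def normalFormCon : Con (FreeMonoid (Fin n)) where
  r u v := normalForm h u.toList = normalForm h v.toList
  iseqv := ⟨fun _ => rfl, Eq.symm, Eq.trans⟩
  mul' {a b c d} hab hcd := by
    simp only [FreeMonoid.toList_mul]
    rw [← normalForm_normalForm_append, hab, normalForm_normalForm_append,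
      ← normalForm_append_normalForm, hcd, normalForm_append_normalForm]

end NormalForm

section Quotient

variable {n : ℕ} (k : Type) [Field k]

noncomputable def quotWord (u : List (Fin n)) : RingQuot (algRel k n) :=
  RingQuot.mkAlgHom k (algRel k n) (wordElem k u)

lemma lift_wordElem {A : Type} [Semiring A] [Algebra k A] (f : FreeMonoid (Fin n) →* A)
    (u : List (Fin n)) :
    FreeAlgebra.lift k (f ∘ FreeMonoid.of) (wordElem k u) = f (.ofList u) := by
  rw [wordElem, map_list_prod, List.map_map, FreeAlgebra.ι_comp_lift, ← FreeMonoid.lift_ofList,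
    FreeMonoid.lift_restrict]

lemma span_range_wordElem :
    Submodule.span k (Set.range (wordElem k : List (Fin n) → FreeAlgebra k (Fin n))) = ⊤ := by
  have : wordElem k = FreeAlgebra.basisFreeMonoid k (Fin n) ∘ FreeMonoid.ofList := by
    funext u
    simp [wordElem, FreeAlgebra.basisFreeMonoid, FreeAlgebra.equivMonoidAlgebraFreeMonoid]
  rw [this, FreeMonoid.ofList.surjective.range_comp, Module.Basis.span_eq]

lemma span_range_quotWord :
    Submodule.span k (Set.range (quotWord k : List (Fin n) → RingQuot (algRel k n))) = ⊤ := by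
  rw [show quotWord k = (RingQuot.mkAlgHom k (algRel k n)).toLinearMap ∘ wordElem k from rfl,
    Set.range_comp, ← Submodule.map_span, span_range_wordElem, Submodule.map_top,
    LinearMap.range_eq_top]
  exact RingQuot.mkAlgHom_surjective k _

variable (h : 0 < n)

noncomputable def toMonoidAlgebraNormalForm :
    RingQuot (algRel k n) →ₐ[k] MonoidAlgebra k (normalFormCon h).Quotient :=
  RingQuot.liftAlgHom k
    ⟨FreeAlgebra.lift k ((MonoidAlgebra.of k _).comp (normalFormCon h).mk' ∘ FreeMonoid.of), by
      rintro _ _ ⟨σ, rfl, rfl⟩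
      rw [epsElem, lift_wordElem, lift_wordElem]
      exact congrArg (MonoidAlgebra.of k _) ((Con.eq _).mpr (normalForm_ofFn_perm h σ))⟩

lemma toMonoidAlgebraNormalForm_quotWord (u : List (Fin n)) :
    toMonoidAlgebraNormalForm k h (quotWord k u) =
      MonoidAlgebra.single ((FreeMonoid.ofList u : FreeMonoid (Fin n)) : (normalFormCon h).Quotient)
        1 := by
  rw [quotWord, toMonoidAlgebraNormalForm, RingQuot.liftAlgHom_mkAlgHom_apply, lift_wordElem]
  rfl

lemma linearIndependent_quotWord_normalWords :
    LinearIndependent k fun w : normalWords h => quotWord k (w : List (Fin n)) := by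
  have hinj : Function.Injective fun w : normalWords h =>
      ((FreeMonoid.ofList (w : List (Fin n))) : (normalFormCon h).Quotient) := by
    intro w w' hww'
    have hnf : normalForm h w = normalForm h w' := (Con.eq _).mp hww'
    exact Subtype.ext (by rwa [normalForm_eq_self h w.2, normalForm_eq_self h w'.2] at hnf)
  refine LinearIndependent.of_comp (toMonoidAlgebraNormalForm k h).toLinearMap ?_
  have hcomp : (toMonoidAlgebraNormalForm k h).toLinearMap ∘
        (fun w : normalWords h => quotWord k w) =
      MonoidAlgebra.basis _ k ∘ fun w : normalWords h => ↑(FreeMonoid.ofList (w : List (Fin n))) :=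
    funext fun w => by
      simp [toMonoidAlgebraNormalForm_quotWord, MonoidAlgebra.basis_apply]
  rw [hcomp]
  exact (MonoidAlgebra.basis _ k).linearIndependent.comp _ hinj

variable {k}

lemma quotWord_append (u v : List (Fin n)) :
    quotWord k (u ++ v) = quotWord k u * quotWord k v := by
  simp [quotWord, wordElem]

lemma quotWord_cons (x : Fin n) (u : List (Fin n)) :
    quotWord k (x :: u) = quotWord k [x] * quotWord k u :=
  quotWord_append [x] u

lemma quotWord_nil : quotWord k ([] : List (Fin n)) = 1 := by
  simp [quotWord, wordElem]

lemma quotWord_of_perm_epsWord {p : List (Fin n)} (hp : p ~ epsWord n) :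
    quotWord k p = quotWord k (epsWord n) := by
  obtain ⟨σ, rfl⟩ := exists_eq_ofFn_of_perm_epsWord hp
  exact RingQuot.mkAlgHom_rel k ⟨σ, rfl, rfl⟩

lemma commute_quotWord_epsWord_singleton (x : Fin n) :
    Commute (quotWord k (epsWord n)) (quotWord k [x]) := by
  have hε : epsWord n ~ x :: (epsWord n).erase x :=
    List.perm_cons_erase (List.mem_ofFn.mpr ⟨x, rfl⟩)
  calc quotWord k (epsWord n) * quotWord k [x]
      = quotWord k (x :: (epsWord n).erase x) * quotWord k [x] := by
        rw [quotWord_of_perm_epsWord hε.symm]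
    _ = quotWord k [x] * quotWord k ((epsWord n).erase x ++ [x]) := by
        rw [← quotWord_append, ← quotWord_append]; rfl
    _ = quotWord k [x] * quotWord k (epsWord n) := by
        rw [quotWord_of_perm_epsWord ((List.perm_append_singleton _ _).trans hε.symm)]

lemma commute_quotWord_epsWord (u : List (Fin n)) :
    Commute (quotWord k (epsWord n)) (quotWord k u) := by
  induction u with
  | nil => rw [quotWord_nil]; exact Commute.one_right _
  | cons x u ih =>
    rw [quotWord_cons]
    exact (commute_quotWord_epsWord_singleton x).mul_right ih

lemma quotWord_epsWord_mul_swap (x y : Fin n) :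
    quotWord k (epsWord n) * quotWord k [x, y] = quotWord k (epsWord n) * quotWord k [y, x] := by
  obtain rfl | hxy := eq_or_ne x y
  · rfl
  set t := ((epsWord n).erase y).erase x
  have hε : epsWord n ~ y :: x :: t :=
    (List.perm_cons_erase (List.mem_ofFn.mpr ⟨y, rfl⟩)).trans
      ((List.perm_cons_erase ((List.mem_erase_of_ne hxy).mpr (List.mem_ofFn.mpr ⟨x, rfl⟩))).cons y)
  calc quotWord k (epsWord n) * quotWord k [x, y]
      = quotWord k (y :: x :: t) * quotWord k [x, y] := by
        rw [quotWord_of_perm_epsWord hε.symm]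
    _ = quotWord k [y, x] * quotWord k (t ++ [x, y]) := by
        rw [← quotWord_append, ← quotWord_append]; rfl
    _ = quotWord k [y, x] * quotWord k (epsWord n) := by
        rw [quotWord_of_perm_epsWord
          (List.perm_append_comm.trans ((List.Perm.swap x y t).symm.trans hε.symm))]
    _ = quotWord k (epsWord n) * quotWord k [y, x] := (commute_quotWord_epsWord _).eq.symm

lemma quotWord_epsWord_mul_of_perm {u v : List (Fin n)} (huv : u ~ v) :
    quotWord k (epsWord n) * quotWord k u = quotWord k (epsWord n) * quotWord k v := by
  induction huv with
  | nil => rfl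
  | @cons x l₁ l₂ _ ih =>
    rw [quotWord_cons x l₁, quotWord_cons x l₂, ← mul_assoc,
      (commute_quotWord_epsWord_singleton x).eq, mul_assoc, ih, ← mul_assoc,
      ← (commute_quotWord_epsWord_singleton x).eq, mul_assoc]
  | swap x y l =>
    rw [show y :: x :: l = [y, x] ++ l from rfl, show x :: y :: l = [x, y] ++ l from rfl,
      quotWord_append, quotWord_append, ← mul_assoc, ← mul_assoc, quotWord_epsWord_mul_swap]
  | trans _ _ ih₁ ih₂ => exact ih₁.trans ih₂

lemma quotWord_eq_epsWord_mul (σ : Equiv.Perm (Fin n)) (a b : List (Fin n)) :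
    quotWord k (a ++ List.ofFn σ ++ b) = quotWord k (epsWord n) * quotWord k (a ++ b) := by
  rw [quotWord_append, quotWord_append, quotWord_of_perm_epsWord (ofFn_perm_epsWord σ),
    ← (commute_quotWord_epsWord a).eq, mul_assoc, ← quotWord_append]

lemma quotWord_eq_of_count_eq {u v : List (Fin n)} (hu : HasPermInfix u) (hv : HasPermInfix v)
    (huv : ∀ i, u.count i = v.count i) : quotWord k u = quotWord k v := by
  obtain ⟨σ, a, b, rfl⟩ := hu
  obtain ⟨τ, c, d, rfl⟩ := hv
  rw [quotWord_eq_epsWord_mul, quotWord_eq_epsWord_mul]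
  refine quotWord_epsWord_mul_of_perm (List.perm_iff_count.mpr fun i => ?_)
  have := huv i
  simp only [List.count_append, (ofFn_perm_epsWord _).count_eq, count_epsWord] at this ⊢
  omega

lemma quotWord_normalForm (u : List (Fin n)) : quotWord k (normalForm h u) = quotWord k u := by
  by_cases hu : HasPermInfix u
  · exact quotWord_eq_of_count_eq ((hasPermInfix_normalForm_iff h).mpr hu) hu (count_normalForm h)
  · rw [normalForm_of_not_hasPermInfix h hu]

end Quotient

/-- The images in `k⟨X⟩/I` of the words with no subword `x_{σ(1)}⋯x_{σ(n)}`, together with the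
words `x_1^{m_1}·x_ε·x_2^{m_2}⋯x_n^{m_n}`, form a `k`-linear basis of `k⟨X⟩/I`. -/
theorem basis_of_quotient (n : ℕ) (hn : 1 ≤ n) (k : Type) [Field k]
    (N : Set (List (Fin n)))
    (hN : N = {w : List (Fin n) |
        ¬ ∃ (σ : Equiv.Perm (Fin n)) (a b : List (Fin n)),
            w = a ++ (List.ofFn fun i => σ i) ++ b} ∪
      {w : List (Fin n) | ∃ m : Fin n → ℕ, w = normalList n hn m})
    (B : N → RingQuot (algRel k n))
    (hB : ∀ w : N, B w = RingQuot.mkAlgHom k (algRel k n) (wordElem k (w : List (Fin n)))) :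
    LinearIndependent k B ∧ Submodule.span k (Set.range B) = ⊤ := by
  obtain rfl : N = normalWords hn := hN
  obtain rfl : B = fun w : normalWords hn => quotWord k (w : List (Fin n)) := funext hB
  refine ⟨linearIndependent_quotWord_normalWords k hn, eq_top_iff.mpr ?_⟩
  rw [← span_range_quotWord k]
  refine Submodule.span_mono ?_
  rintro _ ⟨u, rfl⟩
  exact ⟨⟨normalForm hn u, normalForm_mem_normalWords hn u⟩, quotWord_normalForm hn u⟩
end
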